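/- arXiv:2507.02889 — 2 statements merged into one kernel-verified Lean document; each statement's English description precedes it below -/
import Mathlib

section
/- Let α > 0, β > 0, and let s > 0 be a real number. Then ∫₀^∞ e^{−st} · (∑_{k=0}^∞ (− ψ(αk+β) / (k! · Γ(αk+β))) · t^k) dt = − (1/s) · ∑_{k=0}^∞ s^{−k} · ψ(αk+β) / Γ(αk+β). (The integrand series is the term-by-term derivative with respect to β of the Wright function W_{α,β}(t).) -/
/-!
Since `∫₀^∞ e^{-st} t^k dt = k! / s^(k+1)`, the identity is term-by-term integration, which
is legitimate as soon as `∑ |ψ(αk+β)| / (Γ(αk+β) s^k)` converges. Log-convexity of `Γ` gives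
`log (x - 1) ≤ ψ x ≤ log x`, hence `|ψ x| ≤ x` for `x ≥ 2`, and `Γ x (x - 1)^α ≤ Γ (x + α)`;
the latter makes the ratio of consecutive terms of `∑ r^k (αk+β) / Γ(αk+β)` tend to `0`.
-/

open Real MeasureTheory

/-- The digamma function `ψ(x) = the logarithmic derivative of Γ`, i.e. the derivative of `log ∘ Γ`. -/
noncomputable def digamma (x : ℝ) : ℝ := deriv (fun y : ℝ => Real.log (Real.Gamma y)) x

open Set Filter

theorem differentiableAt_log_Gamma {x : ℝ} (hx : 0 < x) :
    DifferentiableAt ℝ (log ∘ Gamma) x :=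
  (differentiableAt_Gamma fun m => by linarith [m.cast_nonneg (α := ℝ)]).log
    (Gamma_pos_of_pos hx).ne'

theorem log_Gamma_add_one {x : ℝ} (hx : 0 < x) :
    log (Gamma (x + 1)) = log x + log (Gamma x) := by
  rw [Gamma_add_one hx.ne', log_mul hx.ne' (Gamma_pos_of_pos hx).ne']

theorem mul_digamma_le_log_Gamma_add_sub {x a : ℝ} (hx : 0 < x) (ha : 0 < a) :
    a * digamma x ≤ log (Gamma (x + a)) - log (Gamma x) := by
  have h := convexOn_log_Gamma.deriv_le_slope (y := x + a) (mem_Ioi.2 hx)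
    (mem_Ioi.2 (by linarith)) (by linarith) (differentiableAt_log_Gamma hx)
  rw [slope_def_field, add_sub_cancel_left, le_div_iff₀ ha, mul_comm] at h
  exact h

theorem digamma_le_log {x : ℝ} (hx : 0 < x) : digamma x ≤ log x := by
  simpa [log_Gamma_add_one hx] using mul_digamma_le_log_Gamma_add_sub hx one_pos

theorem log_sub_one_le_digamma {x : ℝ} (hx : 1 < x) : log (x - 1) ≤ digamma x := by
  have hx₁ : 0 < x - 1 := by linarith
  have h := convexOn_log_Gamma.slope_le_deriv (mem_Ioi.2 hx₁) (mem_Ioi.2 (by linarith))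
    (by linarith) (differentiableAt_log_Gamma (by linarith))
  have hrec := log_Gamma_add_one hx₁
  rw [sub_add_cancel] at hrec
  rw [slope_def_field, sub_sub_cancel, div_one] at h
  simp only [Function.comp_apply, hrec, add_sub_cancel_right] at h
  exact h

theorem abs_digamma_le {x : ℝ} (hx : 2 ≤ x) : |digamma x| ≤ x := by
  have hlow : 0 ≤ digamma x :=
    (log_nonneg (by linarith)).trans (log_sub_one_le_digamma (by linarith))
  rw [abs_of_nonneg hlow]
  calc digamma x ≤ log x := digamma_le_log (by linarith)
    _ ≤ x - 1 := log_le_sub_one_of_pos (by linarith)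
    _ ≤ x := by linarith

theorem Gamma_mul_rpow_le_Gamma_add {x a : ℝ} (hx : 1 < x) (ha : 0 < a) :
    Gamma x * (x - 1) ^ a ≤ Gamma (x + a) := by
  have hx₁ : 0 < x - 1 := by linarith
  have hΓ : 0 < Gamma x := Gamma_pos_of_pos (by linarith)
  rw [← log_le_log_iff (by positivity) (Gamma_pos_of_pos (by linarith)),
    log_mul hΓ.ne' (rpow_pos_of_pos hx₁ a).ne', log_rpow hx₁]
  have := mul_le_mul_of_nonneg_left (log_sub_one_le_digamma hx) ha.le
  linarith [mul_digamma_le_log_Gamma_add_sub (by linarith : 0 < x) ha]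

theorem add_div_Gamma_add_mul_rpow_le {x a : ℝ} (hx : 1 < x) (ha : 0 < a) :
    (x + a) / Gamma (x + a) * (x - 1) ^ a ≤ (1 + a) * (x / Gamma x) := by
  have hΓ : 0 < Gamma x := Gamma_pos_of_pos (by linarith)
  have hpow : 0 < (x - 1) ^ a := rpow_pos_of_pos (by linarith) a
  calc (x + a) / Gamma (x + a) * (x - 1) ^ a ≤ (x + a) / (Gamma x * (x - 1) ^ a) * (x - 1) ^ a := by
        gcongr
        exact Gamma_mul_rpow_le_Gamma_add hx ha
    _ = (x + a) / Gamma x := by field_simp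
    _ ≤ (1 + a) * (x / Gamma x) := by
        rw [← mul_div_assoc]
        gcongr
        nlinarith

theorem tendsto_mul_natCast_add_atTop {α : ℝ} (hα : 0 < α) (β : ℝ) :
    Tendsto (fun k : ℕ => α * k + β) atTop atTop :=
  tendsto_atTop_add_const_right _ β (tendsto_natCast_atTop_atTop.const_mul_atTop hα)

theorem summable_pow_mul_div_Gamma {α : ℝ} (hα : 0 < α) (β r : ℝ) :
    Summable fun k : ℕ => r ^ k * ((α * k + β) / Gamma (α * k + β)) := by
  have hx := tendsto_mul_natCast_add_atTop hα β
  have hpow : Tendsto (fun k : ℕ => (α * k + β - 1) ^ α) atTop atTop :=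
    (tendsto_rpow_atTop hα).comp (tendsto_atTop_add_const_right _ (-1) hx)
  refine summable_of_ratio_norm_eventually_le (r := 1 / 2) (by norm_num) ?_
  filter_upwards [hx.eventually_ge_atTop 2, hpow.eventually_ge_atTop (2 * |r| * (1 + α))]
    with k hx₂ hlarge
  set x := α * k + β
  have hratio := add_div_Gamma_add_mul_rpow_le (by linarith : 1 < x) hα
  have hsucc : α * ((k + 1 : ℕ) : ℝ) + β = x + α := by push_cast; ring
  have hnorm (y : ℝ) (hy : 0 < y) : ‖y / Gamma y‖ = y / Gamma y :=
    Real.norm_of_nonneg (div_nonneg hy.le (Gamma_pos_of_pos hy).le)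
  rw [hsucc, norm_mul, norm_mul, norm_pow, norm_pow, hnorm x (by linarith),
    hnorm (x + α) (by linarith), pow_succ, Real.norm_eq_abs]
  have key : |r| * ((x + α) / Gamma (x + α)) ≤ 1 / 2 * (x / Gamma x) := by
    have h0 : 0 ≤ (x + α) / Gamma (x + α) :=
      div_nonneg (by linarith) (Gamma_pos_of_pos (by linarith)).le
    nlinarith [mul_le_mul_of_nonneg_left hlarge h0]
  calc |r| ^ k * |r| * ((x + α) / Gamma (x + α))
      = |r| ^ k * (|r| * ((x + α) / Gamma (x + α))) := mul_assoc _ _ _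
    _ ≤ |r| ^ k * (1 / 2 * (x / Gamma x)) := by gcongr
    _ = 1 / 2 * (|r| ^ k * (x / Gamma x)) := by ring

theorem summable_pow_mul_digamma_div_Gamma {α : ℝ} (hα : 0 < α) (β r : ℝ) :
    Summable fun k : ℕ => r ^ k * (digamma (α * k + β) / Gamma (α * k + β)) := by
  refine (summable_pow_mul_div_Gamma hα β r).norm.of_norm_bounded_eventually ?_
  rw [Nat.cofinite_eq_atTop]
  filter_upwards [(tendsto_mul_natCast_add_atTop hα β).eventually_ge_atTop 2] with k hx
  have hΓ : 0 < Gamma (α * k + β) := Gamma_pos_of_pos (by linarith)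
  simp only [norm_mul, Real.norm_eq_abs, abs_div, abs_of_pos hΓ]
  exact mul_le_mul_of_nonneg_left
    (div_le_div_of_nonneg_right ((abs_digamma_le hx).trans (le_abs_self _)) hΓ.le) (by positivity)

theorem integrableOn_exp_neg_mul_mul_pow {s : ℝ} (hs : 0 < s) (k : ℕ) :
    IntegrableOn (fun t => exp (-(s * t)) * t ^ k) (Ioi 0) := by
  refine (integrableOn_rpow_mul_exp_neg_mul_rpow (s := k) (by linarith [k.cast_nonneg (α := ℝ)])
    zero_lt_one hs).congr_fun (fun t _ => ?_) measurableSet_Ioi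
  simp only [rpow_one, rpow_natCast, neg_mul]
  exact mul_comm _ _

theorem integral_exp_neg_mul_mul_pow {s : ℝ} (hs : 0 < s) (k : ℕ) :
    ∫ t in Ioi 0, exp (-(s * t)) * t ^ k = k.factorial / s ^ (k + 1) := by
  have h := integral_rpow_mul_exp_neg_mul_Ioi (a := k + 1) (by positivity) hs
  rw [add_sub_cancel_right, Gamma_nat_eq_factorial, ← Nat.cast_succ, rpow_natCast] at h
  simp only [rpow_natCast, mul_comm _ (exp _)] at h
  rw [h, one_div_pow, one_div_mul_eq_div]

theorem integral_exp_neg_mul_mul_tsum_pow {s : ℝ} (hs : 0 < s) {a : ℕ → ℝ}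
    (ha : Summable fun k => a k * k.factorial / s ^ (k + 1)) :
    ∫ t in Ioi 0, exp (-(s * t)) * ∑' k, a k * t ^ k = ∑' k, a k * k.factorial / s ^ (k + 1) := by
  have hint (k : ℕ) : IntegrableOn (fun t => a k * (exp (-(s * t)) * t ^ k)) (Ioi 0) :=
    (integrableOn_exp_neg_mul_mul_pow hs k).const_mul (a k)
  have hnorm (k : ℕ) : ∫ t in Ioi 0, ‖a k * (exp (-(s * t)) * t ^ k)‖ =
      |a k * k.factorial / s ^ (k + 1)| := by
    rw [mul_div_assoc, abs_mul, abs_of_nonneg (by positivity : (0 : ℝ) ≤ k.factorial / s ^ (k + 1)),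
      ← integral_exp_neg_mul_mul_pow hs, ← integral_const_mul]
    refine setIntegral_congr_fun measurableSet_Ioi fun t (ht : 0 < t) => ?_
    rw [norm_mul, Real.norm_eq_abs, Real.norm_of_nonneg (by positivity)]
  calc ∫ t in Ioi 0, exp (-(s * t)) * ∑' k, a k * t ^ k
      = ∫ t in Ioi 0, ∑' k, a k * (exp (-(s * t)) * t ^ k) := by
        simp only [← tsum_mul_left, mul_left_comm]
    _ = ∑' k, ∫ t in Ioi 0, a k * (exp (-(s * t)) * t ^ k) :=
        (integral_tsum_of_summable_integral_norm hint (by simpa only [hnorm] using ha.abs)).symm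
    _ = ∑' k, a k * k.factorial / s ^ (k + 1) := by
        simp only [integral_const_mul, integral_exp_neg_mul_mul_pow hs, mul_div_assoc]

theorem laplace_deriv_beta_Wright_general (α β s : ℝ) (hα : 0 < α) (hs : 0 < s) :
    (∫ t in Set.Ioi (0 : ℝ), Real.exp (-(s * t)) *
        ∑' k : ℕ, (-(digamma (α * k + β) /
          (k.factorial * Real.Gamma (α * k + β)))) * t ^ k)
      = -((1 / s) * ∑' k : ℕ, s ^ (-(k : ℝ)) * digamma (α * k + β) /
          Real.Gamma (α * k + β)) := by
  have hterm (k : ℕ) : -(digamma (α * k + β) / (k.factorial * Gamma (α * k + β))) *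
      k.factorial / s ^ (k + 1) = -s⁻¹ * (s⁻¹ ^ k * (digamma (α * k + β) / Gamma (α * k + β))) := by
    rw [inv_pow, pow_succ]
    field_simp
  have hsum := (summable_pow_mul_digamma_div_Gamma hα β s⁻¹).mul_left (-s⁻¹)
  rw [integral_exp_neg_mul_mul_tsum_pow hs (hsum.congr fun k => (hterm k).symm),
    tsum_congr hterm, tsum_mul_left]
  simp only [rpow_neg hs.le, rpow_natCast, inv_pow, mul_div_assoc, one_div, neg_mul]

theorem laplace_deriv_beta_Wright (α β s : ℝ) (hα : 0 < α) (hβ : 0 < β) (hs : 0 < s) :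
    (∫ t in Set.Ioi (0 : ℝ), Real.exp (-(s * t)) *
        ∑' k : ℕ, (-(digamma (α * k + β) /
          (k.factorial * Real.Gamma (α * k + β)))) * t ^ k)
      = -((1 / s) * ∑' k : ℕ, s ^ (-(k : ℝ)) * digamma (α * k + β) /
          Real.Gamma (α * k + β)) :=
  laplace_deriv_beta_Wright_general α β s hα hs
end

section
/- Let α₁, β₁, α₂, β₂ > 0, λ ∈ ℝ, and let s > 0 be a real number. Then ∫₀^∞ e^{−st} · (∑_{k=0}^∞ λ^k · t^{α₁k+β₁−1} · (ln t − ψ(α₁k+β₁)) / (Γ(α₁k+β₁) · Γ(α₂k+β₂))) dt = − (ln s / s^{β₁}) · ∑_{k=0}^∞ (λ · s^{−α₁})^k / Γ(α₂k+β₂), i.e. equals − (ln s / s^{β₁}) · E_{α₂,β₂}(λ s^{−α₁}). (The integrand series is the term-by-term derivative with respect to β₁ of t^{β₁−1} E_{(α₁,β₁),(α₂,β₂)}(λ t^{α₁}).) -/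
/-!
Substituting `u = s t` and using `ψ(a) Γ(a) = Γ'(a) = ∫₀^∞ u^(a-1) log u e^(-u) du` gives
`∫₀^∞ t^(a-1) (log t - ψ(a)) e^(-st) dt = -log s · Γ(a) s^(-a)` for every `a > 0`; with
`a = α₁ k + β₁` this evaluates the series term by term, and the factor `Γ(α₁ k + β₁)` cancels.
Integrating term by term is justified by summing the `L¹` norms of the terms. Since
`|log t| ≤ t + t⁻¹`, the integrals `∫₀^∞ t^(a-1) |log t| e^(-st) dt` and `|ψ(a)| Γ(a)` are at
most `Γ(a) s^(-a)` and `Γ(a)` times linear functions of `a` (for `a ≥ 2`), so what remains is a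
Mittag-Leffler series `∑ xᵏ / Γ(α₂ k + β₂)`. It converges for every `x` by the ratio test, since
log-convexity of `Γ` gives `Γ(b + α₂) ≥ Γ(b) (b - 1)^α₂`.
-/

open Real MeasureTheory

open Set Filter

theorem abs_log_le_rpow_add_rpow_neg {ε t : ℝ} (hε : 0 < ε) (ht : 0 < t) :
    |log t| ≤ (t ^ ε + t ^ (-ε)) / ε := by
  have hx : 0 < t ^ ε := rpow_pos_of_pos ht ε
  have hlog : log t = log (t ^ ε) / ε := by rw [log_rpow ht]; field_simp
  rw [hlog, abs_div, abs_of_pos hε, rpow_neg ht.le, div_le_div_iff_of_pos_right hε, abs_le]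
  have hinv := log_le_self (inv_pos.2 hx).le
  rw [log_inv] at hinv
  constructor <;> linarith [log_le_self hx.le, inv_pos.2 hx]

theorem rpow_mul_abs_log_le {a ε t : ℝ} (hε : 0 < ε) (ht : 0 < t) :
    t ^ (a - 1) * |log t| ≤ (t ^ (a + ε - 1) + t ^ (a - ε - 1)) / ε := by
  calc t ^ (a - 1) * |log t| ≤ t ^ (a - 1) * ((t ^ ε + t ^ (-ε)) / ε) := by
        gcongr; exact abs_log_le_rpow_add_rpow_neg hε ht
    _ = (t ^ (a + ε - 1) + t ^ (a - ε - 1)) / ε := by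
        rw [show a + ε - 1 = a - 1 + ε by ring, show a - ε - 1 = a - 1 + -ε by ring,
          rpow_add ht, rpow_add ht]
        ring

theorem integrableOn_rpow_mul_exp_neg_mul {q s : ℝ} (hq : -1 < q) (hs : 0 < s) :
    IntegrableOn (fun t => t ^ q * exp (-(s * t))) (Ioi 0) := by
  simpa using integrableOn_rpow_mul_exp_neg_mul_rpow hq one_pos hs

theorem integrableOn_rpow_mul_log_mul_exp_neg_mul {a s : ℝ} (ha : 0 < a) (hs : 0 < s) :
    IntegrableOn (fun t => t ^ (a - 1) * log t * exp (-(s * t))) (Ioi 0) := by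
  have hdom : IntegrableOn (fun t => (t ^ (a + a / 2 - 1) + t ^ (a - a / 2 - 1)) / (a / 2) *
      exp (-(s * t))) (Ioi 0) := by
    simp_rw [div_mul_eq_mul_div, add_mul]
    exact ((integrableOn_rpow_mul_exp_neg_mul (by linarith) hs).add
      (integrableOn_rpow_mul_exp_neg_mul (by linarith) hs)).div_const _
  refine hdom.mono' (by fun_prop) ?_
  filter_upwards [self_mem_ae_restrict measurableSet_Ioi] with t ht
  rw [norm_mul, norm_mul, norm_of_nonneg (rpow_nonneg ht.le _), norm_of_nonneg (exp_pos _).le,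
    Real.norm_eq_abs]
  gcongr
  exact rpow_mul_abs_log_le (by linarith) ht

theorem integrableOn_rpow_mul_log_sub_digamma_mul_exp_neg_mul {a s : ℝ} (ha : 0 < a)
    (hs : 0 < s) :
    IntegrableOn (fun t => t ^ (a - 1) * (log t - digamma a) * exp (-(s * t))) (Ioi 0) := by
  have hP := integrableOn_rpow_mul_exp_neg_mul (q := a - 1) (by linarith) hs
  refine ((integrableOn_rpow_mul_log_mul_exp_neg_mul ha hs).sub
    (hP.const_mul (digamma a))).congr_fun (fun t _ => ?_) measurableSet_Ioi
  simp only [Pi.sub_apply]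
  ring

theorem hasDerivAt_Gamma_integral {a : ℝ} (ha : 0 < a) :
    HasDerivAt Gamma (∫ t in Ioi 0, t ^ (a - 1) * log t * exp (-t)) a := by
  have hre : 0 < (a : ℂ).re := by simpa using ha
  have hC : HasDerivAt Complex.Gamma
      (∫ t : ℝ in Ioi 0, (t : ℂ) ^ ((a : ℂ) - 1) * (log t * exp (-t))) a := by
    refine (Complex.hasDerivAt_GammaIntegral hre).congr_of_eventuallyEq ?_
    filter_upwards [(isOpen_Ioi.preimage Complex.continuous_re).mem_nhds hre] with z hz
    exact Complex.Gamma_eq_integral hz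
  have hR := hC.real_of_complex
  simp only [Complex.Gamma_ofReal, Complex.ofReal_re] at hR
  convert hR using 1
  rw [← Complex.ofReal_re (∫ t in Ioi 0, _), ← integral_complex_ofReal]
  congr 1
  refine setIntegral_congr_fun measurableSet_Ioi fun t ht => ?_
  rw [Complex.ofReal_mul, Complex.ofReal_mul, Complex.ofReal_cpow (le_of_lt ht)]
  push_cast
  ring

theorem digamma_mul_Gamma {a : ℝ} (ha : 0 < a) :
    digamma a * Gamma a = ∫ t in Ioi 0, t ^ (a - 1) * log t * exp (-t) := by
  have hΓ := (Gamma_pos_of_pos ha).ne'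
  rw [digamma, ((hasDerivAt_Gamma_integral ha).log hΓ).deriv, div_mul_cancel₀ _ hΓ]

theorem integral_rpow_mul_log_sub_digamma_mul_exp_neg_mul {a s : ℝ} (ha : 0 < a) (hs : 0 < s) :
    ∫ t in Ioi 0, t ^ (a - 1) * (log t - digamma a) * exp (-(s * t))
      = -(log s * ((1 / s) ^ a * Gamma a)) := by
  set g : ℝ → ℝ := fun u => u ^ (a - 1) * (log u - digamma a) * exp (-u)
  have hg : ∫ u in Ioi 0, g u = 0 := by
    have hL := integrableOn_rpow_mul_log_mul_exp_neg_mul ha one_pos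
    have hP := integrableOn_rpow_mul_exp_neg_mul (q := a - 1) (by linarith) one_pos
    have hΓ := integral_rpow_mul_exp_neg_mul_Ioi ha one_pos
    simp only [one_mul, div_one, one_rpow] at hL hP hΓ
    calc ∫ u in Ioi 0, g u = (∫ u in Ioi 0, u ^ (a - 1) * log u * exp (-u))
          - digamma a * ∫ u in Ioi 0, u ^ (a - 1) * exp (-u) := by
          rw [← integral_const_mul, ← integral_sub hL (hP.const_mul _)]
          refine integral_congr_ae (ae_of_all _ fun u => ?_)
          simp only [g]
          ring
      _ = 0 := by rw [hΓ, ← digamma_mul_Gamma ha]; ring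
  have hK := integrableOn_rpow_mul_log_sub_digamma_mul_exp_neg_mul ha hs
  have hP := integrableOn_rpow_mul_exp_neg_mul (q := a - 1) (by linarith) hs
  have hscale : ∫ t in Ioi 0, g (s * t) = s ^ (a - 1) *
      ((∫ t in Ioi 0, t ^ (a - 1) * (log t - digamma a) * exp (-(s * t)))
        + log s * ((1 / s) ^ a * Gamma a)) := by
    rw [← integral_rpow_mul_exp_neg_mul_Ioi ha hs, ← integral_const_mul, ← integral_add hK
      (hP.const_mul _), ← integral_const_mul]
    refine setIntegral_congr_fun measurableSet_Ioi fun t ht => ?_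
    simp only [g]
    rw [mul_rpow hs.le (le_of_lt ht), log_mul hs.ne' (ne_of_gt ht)]
    ring
  have hzero : ∫ t in Ioi 0, g (s * t) = 0 := by
    rw [integral_comp_mul_left_Ioi g 0 hs, mul_zero, hg, smul_zero]
  rw [hzero] at hscale
  have := (mul_eq_zero.1 hscale.symm).resolve_left (rpow_pos_of_pos hs _).ne'
  linarith

theorem integral_norm_rpow_mul_log_mul_exp_neg_mul_le {a s : ℝ} (ha : 1 < a) (hs : 0 < s) :
    ∫ t in Ioi 0, ‖t ^ (a - 1) * log t * exp (-(s * t))‖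
      ≤ (1 / s) ^ a * Gamma a * (a / s + s / (a - 1)) := by
  have hP₁ := integrableOn_rpow_mul_exp_neg_mul (q := a + 1 - 1) (by linarith) hs
  have hP₂ := integrableOn_rpow_mul_exp_neg_mul (q := a - 1 - 1) (by linarith) hs
  have hΓ : Gamma a = (a - 1) * Gamma (a - 1) := by
    rw [← Gamma_add_one (by linarith), sub_add_cancel]
  calc ∫ t in Ioi 0, ‖t ^ (a - 1) * log t * exp (-(s * t))‖
      ≤ ∫ t in Ioi 0, t ^ (a + 1 - 1) * exp (-(s * t)) + t ^ (a - 1 - 1) * exp (-(s * t)) := by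
        refine integral_mono_of_nonneg (ae_of_all _ fun _ => norm_nonneg _) (hP₁.add hP₂) ?_
        filter_upwards [self_mem_ae_restrict measurableSet_Ioi] with t ht
        rw [norm_mul, norm_mul, norm_of_nonneg (rpow_nonneg (le_of_lt ht) _),
          norm_of_nonneg (exp_pos _).le, Real.norm_eq_abs, ← add_mul]
        gcongr
        simpa using rpow_mul_abs_log_le (a := a) one_pos ht
    _ = (1 / s) ^ (a + 1) * Gamma (a + 1) + (1 / s) ^ (a - 1) * Gamma (a - 1) := by
        rw [integral_add hP₁ hP₂, integral_rpow_mul_exp_neg_mul_Ioi (by linarith) hs,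
          integral_rpow_mul_exp_neg_mul_Ioi (by linarith) hs]
    _ = (1 / s) ^ a * Gamma a * (a / s + s / (a - 1)) := by
        rw [rpow_add_one (by positivity), rpow_sub_one (by positivity), Gamma_add_one (by linarith),
          hΓ]
        have : a - 1 ≠ 0 := by linarith
        field_simp

theorem abs_digamma_le_s13 {a : ℝ} (ha : 1 < a) : |digamma a| ≤ a + (a - 1)⁻¹ := by
  have hΓ := Gamma_pos_of_pos (by linarith : 0 < a)
  have h := (norm_integral_le_integral_norm _).trans
    (integral_norm_rpow_mul_log_mul_exp_neg_mul_le ha one_pos)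
  simp only [one_mul, ← digamma_mul_Gamma (by linarith : 0 < a), norm_mul, Real.norm_eq_abs,
    abs_of_pos hΓ, div_one, one_rpow, one_div] at h
  rw [← mul_le_mul_iff_left₀ hΓ]
  linarith

theorem integral_norm_rpow_mul_log_sub_digamma_mul_exp_neg_mul_le {a s : ℝ} (ha : 1 < a)
    (hs : 0 < s) :
    ∫ t in Ioi 0, ‖t ^ (a - 1) * (log t - digamma a) * exp (-(s * t))‖
      ≤ (1 / s) ^ a * Gamma a * (a / s + s / (a - 1) + (a + (a - 1)⁻¹)) := by
  have hL := (integrableOn_rpow_mul_log_mul_exp_neg_mul (a := a) (by linarith) hs).norm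
  have hP := integrableOn_rpow_mul_exp_neg_mul (q := a - 1) (by linarith) hs
  have hΓ : 0 < (1 / s) ^ a * Gamma a := by
    have := Gamma_pos_of_pos (by linarith : 0 < a)
    positivity
  calc ∫ t in Ioi 0, ‖t ^ (a - 1) * (log t - digamma a) * exp (-(s * t))‖
      ≤ ∫ t in Ioi 0, ‖t ^ (a - 1) * log t * exp (-(s * t))‖
          + |digamma a| * (t ^ (a - 1) * exp (-(s * t))) := by
        refine integral_mono_of_nonneg (ae_of_all _ fun _ => norm_nonneg _)
          (hL.add (hP.const_mul |digamma a|)) ?_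
        filter_upwards [self_mem_ae_restrict measurableSet_Ioi] with t ht
        have hpos : 0 ≤ t ^ (a - 1) * exp (-(s * t)) :=
          mul_nonneg (rpow_nonneg (le_of_lt ht) _) (exp_pos _).le
        calc ‖t ^ (a - 1) * (log t - digamma a) * exp (-(s * t))‖
            = ‖t ^ (a - 1) * log t * exp (-(s * t))
                - digamma a * (t ^ (a - 1) * exp (-(s * t)))‖ := by
              ring_nf
          _ ≤ _ := by
              refine (norm_sub_le _ _).trans_eq ?_
              rw [norm_mul (digamma a), norm_of_nonneg hpos, Real.norm_eq_abs (digamma a)]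
    _ = (∫ t in Ioi 0, ‖t ^ (a - 1) * log t * exp (-(s * t))‖)
          + |digamma a| * ((1 / s) ^ a * Gamma a) := by
        rw [integral_add hL (hP.const_mul _), integral_const_mul,
          integral_rpow_mul_exp_neg_mul_Ioi (by linarith) hs]
    _ ≤ (1 / s) ^ a * Gamma a * (a / s + s / (a - 1))
          + (a + (a - 1)⁻¹) * ((1 / s) ^ a * Gamma a) := by
        gcongr
        exacts [integral_norm_rpow_mul_log_mul_exp_neg_mul_le ha hs, abs_digamma_le_s13 ha]
    _ = (1 / s) ^ a * Gamma a * (a / s + s / (a - 1) + (a + (a - 1)⁻¹)) := by ring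

theorem Gamma_mul_sub_one_rpow_le_Gamma_add {a ε : ℝ} (ha : 1 < a) (hε : 0 < ε) :
    Gamma a * (a - 1) ^ ε ≤ Gamma (a + ε) := by
  have hΓ₀ := Gamma_pos_of_pos (by linarith : 0 < a - 1)
  have hΓ := Gamma_pos_of_pos (by linarith : 0 < a)
  have hrec : log (Gamma a) - log (Gamma (a - 1)) = log (a - 1) := by
    have h := Gamma_add_one (s := a - 1) (by linarith)
    rw [sub_add_cancel] at h
    rw [h, log_mul (by linarith) hΓ₀.ne']
    ring
  have hslope := convexOn_log_Gamma.slope_mono_adjacent (mem_Ioi.2 (by linarith : 0 < a - 1))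
    (mem_Ioi.2 (by linarith : 0 < a + ε)) (by linarith : a - 1 < a) (lt_add_of_pos_right a hε)
  simp only [Function.comp_apply, sub_sub_cancel, add_sub_cancel_left, div_one, hrec] at hslope
  rw [← log_le_log_iff (by positivity) (Gamma_pos_of_pos (by linarith)),
    log_mul hΓ.ne' (by positivity), log_rpow (by linarith)]
  linarith [(le_div_iff₀ hε).1 hslope]

theorem summable_pow_div_Gamma (x : ℝ) {α : ℝ} (hα : 0 < α) (β : ℝ) :
    Summable fun k : ℕ => x ^ k / Gamma (α * k + β) := by
  have hb : Tendsto (fun k : ℕ => α * k + β) atTop atTop :=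
    tendsto_atTop_add_const_right _ β (tendsto_natCast_atTop_atTop.const_mul_atTop hα)
  have hbα : Tendsto (fun k : ℕ => (α * k + β - 1) ^ α) atTop atTop :=
    (tendsto_rpow_atTop hα).comp (tendsto_atTop_add_const_right _ (-1) hb)
  refine summable_of_ratio_norm_eventually_le (r := 1 / 2) (by norm_num) ?_
  filter_upwards [hb.eventually_gt_atTop 1, hbα.eventually_ge_atTop (2 * |x|)] with k hk₁ hk₂
  have hΓ : 0 < Gamma (α * k + β) := Gamma_pos_of_pos (by linarith)
  have hnext : α * ↑(k + 1) + β = α * k + β + α := by push_cast; ring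
  have hratio : Gamma (α * k + β) * (2 * |x|) ≤ Gamma (α * k + β + α) :=
    (mul_le_mul_of_nonneg_left hk₂ hΓ.le).trans (Gamma_mul_sub_one_rpow_le_Gamma_add hk₁ hα)
  have hΓ' : 0 < Gamma (α * k + β + α) := Gamma_pos_of_pos (by linarith)
  rw [hnext, norm_div, norm_div, norm_pow, norm_pow, pow_succ, Real.norm_eq_abs,
    norm_of_nonneg hΓ.le, norm_of_nonneg hΓ'.le, div_le_iff₀ hΓ']
  calc |x| ^ k * |x| = |x| ^ k / Gamma (α * k + β) * (Gamma (α * k + β) * |x|) := by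
        field_simp
    _ ≤ |x| ^ k / Gamma (α * k + β) * (Gamma (α * k + β + α) / 2) := by
        gcongr
        linarith
    _ = 1 / 2 * (|x| ^ k / Gamma (α * k + β)) * Gamma (α * k + β + α) := by ring

noncomputable def laplaceIntegrandTerm (α₁ β₁ α₂ β₂ lam s : ℝ) (k : ℕ) (t : ℝ) : ℝ :=
  lam ^ k / (Gamma (α₁ * k + β₁) * Gamma (α₂ * k + β₂)) *
    (t ^ (α₁ * k + β₁ - 1) * (log t - digamma (α₁ * k + β₁)) * exp (-(s * t)))

theorem integrableOn_laplaceIntegrandTerm {α₁ β₁ s : ℝ} (α₂ β₂ lam : ℝ) {k : ℕ}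
    (ha : 0 < α₁ * k + β₁) (hs : 0 < s) :
    IntegrableOn (laplaceIntegrandTerm α₁ β₁ α₂ β₂ lam s k) (Ioi 0) :=
  (integrableOn_rpow_mul_log_sub_digamma_mul_exp_neg_mul ha hs).const_mul _

theorem integral_laplaceIntegrandTerm {α₁ β₁ s : ℝ} (α₂ β₂ lam : ℝ) {k : ℕ}
    (ha : 0 < α₁ * k + β₁) (hs : 0 < s) :
    ∫ t in Ioi 0, laplaceIntegrandTerm α₁ β₁ α₂ β₂ lam s k t
      = -(log s / s ^ β₁) * ((lam * s ^ (-α₁)) ^ k / Gamma (α₂ * k + β₂)) := by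
  have hΓ := (Gamma_pos_of_pos ha).ne'
  simp only [laplaceIntegrandTerm]
  rw [integral_const_mul, integral_rpow_mul_log_sub_digamma_mul_exp_neg_mul ha hs,
    rpow_add (by positivity), rpow_mul_natCast (by positivity), one_div, inv_rpow hs.le,
    inv_rpow hs.le, ← rpow_neg hs.le, mul_pow]
  field_simp

theorem integral_norm_laplaceIntegrandTerm_le {α₁ β₁ s : ℝ} (α₂ β₂ lam : ℝ) {k : ℕ}
    (ha : 2 ≤ α₁ * k + β₁) (hs : 0 < s) :
    ∫ t in Ioi 0, ‖laplaceIntegrandTerm α₁ β₁ α₂ β₂ lam s k t‖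
      ≤ (α₁ * k + β₁ + 1) * ((s + 1 + s⁻¹) * (1 / s) ^ β₁ *
          ((|lam| * (1 / s) ^ α₁) ^ k / |Gamma (α₂ * k + β₂)|)) := by
  simp only [laplaceIntegrandTerm, norm_mul (_ / (_ * _))]
  rw [integral_const_mul]
  set a := α₁ * k + β₁
  have hΓ : 0 < Gamma a := Gamma_pos_of_pos (by linarith)
  have hconst : a / s + s / (a - 1) + (a + (a - 1)⁻¹) ≤ (a + 1) * (s + 1 + s⁻¹) := by
    have h1 : (a - 1)⁻¹ ≤ 1 := inv_le_one_of_one_le₀ (by linarith)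
    rw [div_eq_mul_inv, div_eq_mul_inv]
    nlinarith [mul_le_mul_of_nonneg_left h1 hs.le, inv_pos.2 hs, mul_pos hs (by linarith : 0 < a)]
  calc ‖lam ^ k / (Gamma a * Gamma (α₂ * k + β₂))‖ *
        ∫ t in Ioi 0, ‖t ^ (a - 1) * (log t - digamma a) * exp (-(s * t))‖
      ≤ ‖lam ^ k / (Gamma a * Gamma (α₂ * k + β₂))‖ *
        ((1 / s) ^ a * Gamma a * ((a + 1) * (s + 1 + s⁻¹))) := by
        gcongr
        exact (integral_norm_rpow_mul_log_sub_digamma_mul_exp_neg_mul_le (by linarith) hs).trans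
          (by gcongr)
    _ = _ := by
        rw [show (1 / s) ^ a = ((1 / s) ^ α₁) ^ k * (1 / s) ^ β₁ by
          rw [rpow_add (by positivity), rpow_mul_natCast (by positivity)]]
        simp only [norm_div, norm_mul, norm_pow, Real.norm_eq_abs, abs_of_pos hΓ, mul_pow]
        field_simp

theorem summable_integral_norm_laplaceIntegrandTerm {α₁ α₂ s : ℝ} (β₁ β₂ lam : ℝ)
    (hα₁ : 0 < α₁) (hα₂ : 0 < α₂) (hs : 0 < s) :
    Summable fun k : ℕ => ∫ t in Ioi 0, ‖laplaceIntegrandTerm α₁ β₁ α₂ β₂ lam s k t‖ := by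
  have ha : Tendsto (fun k : ℕ => α₁ * k + β₁) atTop atTop :=
    tendsto_atTop_add_const_right _ β₁ (tendsto_natCast_atTop_atTop.const_mul_atTop hα₁)
  set C := (α₁ + |β₁| + 1) * ((s + 1 + s⁻¹) * (1 / s) ^ β₁)
  refine Summable.of_norm_bounded_eventually_nat
    ((summable_pow_div_Gamma (2 * |lam| * (1 / s) ^ α₁) hα₂ β₂).norm.mul_left C) ?_
  filter_upwards [ha.eventually_ge_atTop 2] with k hk
  have hlin : α₁ * k + β₁ + 1 ≤ (α₁ + |β₁| + 1) * 2 ^ k := by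
    have hk2 : (k : ℝ) ≤ 2 ^ k := by exact_mod_cast k.lt_two_pow_self.le
    have h1 : (1 : ℝ) ≤ 2 ^ k := one_le_pow₀ (by norm_num)
    nlinarith [le_abs_self β₁, abs_nonneg β₁]
  rw [norm_of_nonneg (integral_nonneg fun _ => norm_nonneg _)]
  refine (integral_norm_laplaceIntegrandTerm_le α₂ β₂ lam hk hs).trans ?_
  calc (α₁ * k + β₁ + 1) * ((s + 1 + s⁻¹) * (1 / s) ^ β₁ *
          ((|lam| * (1 / s) ^ α₁) ^ k / |Gamma (α₂ * k + β₂)|))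
      ≤ (α₁ + |β₁| + 1) * 2 ^ k * ((s + 1 + s⁻¹) * (1 / s) ^ β₁ *
          ((|lam| * (1 / s) ^ α₁) ^ k / |Gamma (α₂ * k + β₂)|)) := by gcongr
    _ = C * ‖(2 * |lam| * (1 / s) ^ α₁) ^ k / Gamma (α₂ * k + β₂)‖ := by
        simp only [C, norm_div, norm_pow, norm_mul, Real.norm_eq_abs, abs_abs, mul_pow,
          abs_two, abs_of_pos (by positivity : 0 < (1 / s) ^ α₁)]
        ring

theorem laplace_deriv_beta1_4ML_general (α₁ β₁ α₂ β₂ lam s : ℝ) (hα₁ : 0 < α₁) (hβ₁ : 0 < β₁)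
    (hα₂ : 0 < α₂) (hs : 0 < s) :
    (∫ t in Set.Ioi (0 : ℝ), Real.exp (-(s * t)) *
        ∑' k : ℕ, lam ^ k * t ^ (α₁ * k + β₁ - 1) *
          (Real.log t - digamma (α₁ * k + β₁)) /
            (Real.Gamma (α₁ * k + β₁) * Real.Gamma (α₂ * k + β₂)))
      = -((Real.log s / s ^ β₁) *
          ∑' k : ℕ, (lam * s ^ (-α₁)) ^ k / Real.Gamma (α₂ * k + β₂)) := by
  have ha : ∀ k : ℕ, 0 < α₁ * k + β₁ := fun k => by positivity
  calc _ = ∫ t in Ioi 0, ∑' k, laplaceIntegrandTerm α₁ β₁ α₂ β₂ lam s k t := by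
        refine setIntegral_congr_fun measurableSet_Ioi fun t _ => ?_
        rw [← tsum_mul_left]
        congr with k
        rw [laplaceIntegrandTerm]
        ring
    _ = ∑' k, ∫ t in Ioi 0, laplaceIntegrandTerm α₁ β₁ α₂ β₂ lam s k t :=
        (integral_tsum_of_summable_integral_norm
          (fun k => integrableOn_laplaceIntegrandTerm α₂ β₂ lam (ha k) hs)
          (summable_integral_norm_laplaceIntegrandTerm β₁ β₂ lam hα₁ hα₂ hs)).symm
    _ = _ := by
        simp_rw [integral_laplaceIntegrandTerm α₂ β₂ lam (ha _) hs]
        rw [tsum_mul_left, neg_mul]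

theorem laplace_deriv_beta1_4ML (α₁ β₁ α₂ β₂ lam s : ℝ) (hα₁ : 0 < α₁) (hβ₁ : 0 < β₁)
    (hα₂ : 0 < α₂) (hβ₂ : 0 < β₂) (hs : 0 < s) :
    (∫ t in Set.Ioi (0 : ℝ), Real.exp (-(s * t)) *
        ∑' k : ℕ, lam ^ k * t ^ (α₁ * k + β₁ - 1) *
          (Real.log t - digamma (α₁ * k + β₁)) /
            (Real.Gamma (α₁ * k + β₁) * Real.Gamma (α₂ * k + β₂)))
      = -((Real.log s / s ^ β₁) *
          ∑' k : ℕ, (lam * s ^ (-α₁)) ^ k / Real.Gamma (α₂ * k + β₂)) :=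
  laplace_deriv_beta1_4ML_general α₁ β₁ α₂ β₂ lam s hα₁ hβ₁ hα₂ hs
end
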